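/- In the asynchronous simulation model with complete neighborhood N and τ such that −N ⊆ N^τ, if advancing from simulated time s to s+τ requires knowledge of the simulated time-s states of all cells in c + N^τ ⊇ c − N, then for any two cells c, c' with c' ∈ c + N, the difference of their simulated times at any real time is at most τ. -/
import Mathlib


open Pointwise

/-- `mpow N k` is the `k`-fold Minkowski sum of `N ⊆ ℤᵈ` with itself (`mpow N 0 = {0}`). -/
def mpow {d : ℕ} (N : Set (Fin d → ℤ)) : ℕ → Set (Fin d → ℤ)
  | 0 => {0}
  | k + 1 => N + mpow N k

theorem stmt_18 (d : ℕ) (N : Set (Fin d → ℤ)) (hN : N.Finite)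
    (hcomplete : (⋃ k : ℕ, mpow N k) = Set.univ)
    (τ : ℕ) (hτ : -N ⊆ mpow N τ)
    (sim : ℕ → (Fin d → ℤ) → ℕ)
    -- all cells start at simulated time `0`
    (hinit : ∀ c, sim 0 c = 0)
    -- simulated time never decreases and increases by at most one per real step
    (hmono : ∀ t c, sim t c ≤ sim (t + 1) c)
    (hstep : ∀ t c, sim (t + 1) c ≤ sim t c + 1)
    -- a cell advances only if all its neighbors have simulated time at least its own
    (hadv : ∀ t c, sim t c < sim (t + 1) c → ∀ v ∈ N, sim t c ≤ sim t (c + v))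
    -- advancing from `s` to `s + τ` requires knowledge of the simulated time-`s`
    -- states of all cells in `c + N^τ`: a cell is never more than `τ` simulated
    -- steps ahead of any cell of its `N^τ`-neighborhood
    (hknow : ∀ t c, ∀ w ∈ mpow N τ, sim t c ≤ sim t (c + w) + τ) :
    ∀ t c, ∀ v ∈ N, |(sim t c : ℤ) - (sim t (c + v) : ℤ)| ≤ τ := by
  intro t c v hv
  have hnv : -v ∈ mpow N τ := hτ (Set.neg_mem_neg.mpr hv)
  have h1 : sim t (c + v) ≤ sim t c + τ := by
    have := hknow t (c + v) (-v) hnv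
    simpa using this
  have h2 : sim t c ≤ sim t (c + v) + τ := by
    match τ, hnv with
    | 0, hnv =>
      have hv0 : v = 0 := by
        have : -v = 0 := hnv
        simpa [neg_eq_zero] using this
      simp [hv0]
    | τ' + 1, _ =>
      clear h1
      induction t with
      | zero => simp [hinit]
      | succ t ih =>
        rcases eq_or_lt_of_le (hmono t c) with heq | hlt
        · calc sim (t + 1) c = sim t c := heq.symm
            _ ≤ sim t (c + v) + (τ' + 1) := ih
            _ ≤ sim (t + 1) (c + v) + (τ' + 1) := by
                have := hmono t (c + v); omega
        · have h3 := hadv t c hlt v hv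
          have h4 := hstep t c
          have h5 := hmono t (c + v)
          omega
  rw [abs_sub_le_iff]
  constructor <;> push_cast <;> omega
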